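/- arXiv:math/0608466 — 4 statements merged into one kernel-verified Lean document; each statement's English description precedes it below -/
import Mathlib

section
/- For all z, w in the open unit disk D = {ζ ∈ ℂ : |ζ| < 1} and all t ∈ [0, 1], (1 − |t z + (1 − t) w|²)/|1 − z̄ w| ≥ 1 − |(z − w)/(1 − z̄ w)|. -/
/-!
Multiplied by `|1 - z̄ w|`, the inequality reads `|1 - z̄ w| - |z - w| ≤ 1 - |t z + (1 - t) w|²`.
Writing `1 - z̄ w = t (1 - |z|² + z̄ (z - w)) + (1 - t) (1 - |w|² + (w̄ - z̄) w)`, the triangle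
inequality gives `|1 - z̄ w| ≤ t (1 - |z|²) + (1 - t) (1 - |w|²) + m |z - w|` with
`m = t |z| + (1 - t) |w| ≤ 1`. Since `|t z + (1 - t) w| ≤ m` and `m² ≤ t |z|² + (1 - t) |w|²`
by convexity of the square, the claim follows.
-/

open ComplexConjugate

section
variable {𝕜 : Type*} [RCLike 𝕜]

lemma RCLike.norm_one_sub_conj_mul_self {z : 𝕜} (hz : ‖z‖ ≤ 1) :
    ‖1 - conj z * z‖ = 1 - ‖z‖ ^ 2 := by
  rw [RCLike.conj_mul, ← RCLike.ofReal_pow, ← RCLike.ofReal_one, ← RCLike.ofReal_sub,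
    RCLike.norm_ofReal, abs_of_nonneg (by nlinarith [norm_nonneg z])]

lemma RCLike.one_sub_conj_mul_ne_zero {z w : 𝕜} (hz : ‖z‖ < 1) (hw : ‖w‖ ≤ 1) :
    1 - conj z * w ≠ 0 := by
  have : ‖conj z * w‖ < 1 := by
    rw [norm_mul, RCLike.norm_conj]
    nlinarith [norm_nonneg z, norm_nonneg w]
  intro h
  rw [← sub_eq_zero.mp h, norm_one] at this
  exact this.false

lemma RCLike.norm_convex_combination_le (z w : 𝕜) {t : ℝ} (ht0 : 0 ≤ t) (ht1 : t ≤ 1) :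
    ‖(t : 𝕜) * z + (1 - (t : 𝕜)) * w‖ ≤ t * ‖z‖ + (1 - t) * ‖w‖ := by
  have h := (convexOn_norm convex_univ).2 (Set.mem_univ z) (Set.mem_univ w) ht0 (sub_nonneg.2 ht1)
    (add_sub_cancel t 1)
  simpa only [RCLike.real_smul_eq_coe_mul, RCLike.ofReal_sub, RCLike.ofReal_one,
    smul_eq_mul] using h

lemma RCLike.norm_one_sub_conj_mul_le {z w : 𝕜} (hz : ‖z‖ ≤ 1) (hw : ‖w‖ ≤ 1) {t : ℝ}
    (ht0 : 0 ≤ t) (ht1 : t ≤ 1) :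
    ‖1 - conj z * w‖ ≤ t * (1 - ‖z‖ ^ 2) + (1 - t) * (1 - ‖w‖ ^ 2) +
      (t * ‖z‖ + (1 - t) * ‖w‖) * ‖z - w‖ := by
  have hz' : ‖(1 - conj z * z) + conj z * (z - w)‖ ≤ (1 - ‖z‖ ^ 2) + ‖z‖ * ‖z - w‖ := by
    refine (norm_add_le _ _).trans_eq ?_
    rw [norm_one_sub_conj_mul_self hz, norm_mul, RCLike.norm_conj]
  have hw' : ‖(1 - conj w * w) + (conj w - conj z) * w‖ ≤ (1 - ‖w‖ ^ 2) + ‖w‖ * ‖z - w‖ := by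
    refine (norm_add_le _ _).trans_eq ?_
    rw [norm_one_sub_conj_mul_self hw, norm_mul, ← map_sub, RCLike.norm_conj, norm_sub_rev,
      mul_comm]
  calc ‖1 - conj z * w‖
      = ‖(t : 𝕜) * ((1 - conj z * z) + conj z * (z - w)) +
          (1 - (t : 𝕜)) * ((1 - conj w * w) + (conj w - conj z) * w)‖ := by ring_nf
    _ ≤ t * ((1 - ‖z‖ ^ 2) + ‖z‖ * ‖z - w‖) + (1 - t) * ((1 - ‖w‖ ^ 2) + ‖w‖ * ‖z - w‖) :=
        (RCLike.norm_convex_combination_le _ _ ht0 ht1).trans (by gcongr)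
    _ = _ := by ring

lemma RCLike.norm_one_sub_conj_mul_sub_norm_sub_le {z w : 𝕜} (hz : ‖z‖ ≤ 1) (hw : ‖w‖ ≤ 1)
    {t : ℝ} (ht0 : 0 ≤ t) (ht1 : t ≤ 1) :
    ‖1 - conj z * w‖ - ‖z - w‖ ≤ 1 - ‖(t : 𝕜) * z + (1 - (t : 𝕜)) * w‖ ^ 2 := by
  have hD := norm_one_sub_conj_mul_le hz hw ht0 ht1
  have hc := norm_convex_combination_le z w ht0 ht1
  set m := t * ‖z‖ + (1 - t) * ‖w‖
  have hm : m ≤ 1 := by nlinarith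
  have hsq : m ^ 2 ≤ t * ‖z‖ ^ 2 + (1 - t) * ‖w‖ ^ 2 := by
    nlinarith [mul_nonneg (mul_nonneg ht0 (sub_nonneg.2 ht1)) (sq_nonneg (‖z‖ - ‖w‖))]
  have hc2 : ‖(t : 𝕜) * z + (1 - (t : 𝕜)) * w‖ ^ 2 ≤ m ^ 2 := by gcongr
  nlinarith [mul_nonneg (sub_nonneg.2 hm) (norm_nonneg (z - w))]

end

/-- key inequality from the proof of Lemma 4.1 in Kriete–Moorhouse.
For `z, w` in the open unit disk and `t ∈ [0,1]`,
`(1 − |tz + (1−t)w|²)/|1 − z̄w| ≥ 1 − |(z − w)/(1 − z̄w)|`. -/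
theorem stmt_3 (z w : ℂ) (hz : ‖z‖ < 1) (hw : ‖w‖ < 1)
    (t : ℝ) (ht0 : 0 ≤ t) (ht1 : t ≤ 1) :
    1 - ‖(z - w) / (1 - (starRingEnd ℂ) z * w)‖ ≤
      (1 - ‖(t : ℂ) * z + (1 - (t : ℂ)) * w‖ ^ 2) /
        ‖1 - (starRingEnd ℂ) z * w‖ := by
  have hD : 0 < ‖1 - conj z * w‖ := norm_pos_iff.2 (RCLike.one_sub_conj_mul_ne_zero hz hw.le)
  rw [norm_div, one_sub_div hD.ne']
  exact div_le_div_of_nonneg_right (RCLike.norm_one_sub_conj_mul_sub_norm_sub_le hz.le hw.le ht0 ht1) hD.le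
end

section
/- Let m denote normalized Lebesgue measure dθ/2π on the unit circle ∂D, let φ, ψ : ∂D → D be measurable functions with values in the open unit disk, let a ∈ (0, 1), and let G ⊆ ∂D be a measurable set on which |(φ − ψ)/(1 − φ̄ ψ)| ≤ a. Fix t ∈ [0, 1] and set φ_t = t φ + (1 − t) ψ. Let ν_t be the pushforward under φ_t of the measure χ_G |φ − ψ|² dm, and let β_t be the pushforward under φ_t of the measure χ_G |(φ − ψ)/(1 − φ̄ ψ)|² dm (both measures on D). Then for every ζ ∈ ∂D and every δ > 0, ν_t(S(ζ, δ)) ≤ (4 δ² / (1 − a)²) · β_t(S(ζ, δ)), where S(ζ, δ) = {z ∈ D : |z − ζ| < δ}. -/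
open Complex MeasureTheory Metric Filter Set Topology
open scoped ENNReal ComplexConjugate Real

/-- Normalized Lebesgue (arclength) measure `dθ/2π` on the unit circle,
as a Borel measure on `ℂ`. -/
noncomputable def circleMeasure : Measure ℂ :=
  Measure.map (fun θ : ℝ => Complex.exp (θ * Complex.I))
    ((ENNReal.ofReal (2 * Real.pi))⁻¹ • volume.restrict (Set.Ioc 0 (2 * Real.pi)))

/-!
On `G ∩ φ_t⁻¹(S(ζ, δ))` the densities compare pointwise. Write `D = |1 - φ̄ψ|`, so that
`|φ - ψ| = ρ D` with `ρ ≤ a`. Since `|ζ| = 1`, `1 - φ̄ψ = ζ (ζ̄ - φ̄) + φ̄ (ζ - ψ)`, whence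
`D ≤ |ζ - φ| + |ζ - ψ| ≤ 2δ + |φ - ψ| ≤ 2δ + a D`, the middle step because `φ_t` lies on the
segment `[φ, ψ]` within `δ` of `ζ`. Thus `D ≤ 2δ / (1 - a)` and `|φ - ψ|² ≤ 4δ²/(1 - a)² ρ²`.
-/

theorem MeasureTheory.Measure.map_withDensity_apply_le_const_mul {α β : Type*}
    [MeasurableSpace α] [MeasurableSpace β] {μ : Measure α} {T : α → β} (hT : Measurable T)
    {S : Set β} (hS : MeasurableSet S) {f g : α → ℝ≥0∞} {c : ℝ≥0∞} (hc : c ≠ ∞)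
    (hfg : ∀ᵐ x ∂μ, T x ∈ S → f x ≤ c * g x) :
    (μ.withDensity f).map T S ≤ c * (μ.withDensity g).map T S := by
  rw [Measure.map_apply hT hS, Measure.map_apply hT hS, withDensity_apply _ (hT hS),
    withDensity_apply _ (hT hS), ← lintegral_const_mul' _ _ hc]
  exact setLIntegral_mono_ae' (hT hS) hfg

namespace Complex

theorem one_sub_conj_mul_ne_zero {p q : ℂ} (hp : ‖p‖ ≤ 1) (hq : ‖q‖ < 1) :
    1 - conj p * q ≠ 0 := by
  refine sub_ne_zero.2 fun h => ?_
  have : ‖conj p * q‖ < 1 := by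
    rw [norm_mul, norm_conj]
    exact (mul_le_of_le_one_left (norm_nonneg q) hp).trans_lt hq
  simp [← h] at this

theorem norm_one_sub_conj_mul_le {p q ζ : ℂ} (hp : ‖p‖ ≤ 1) (hζ : ‖ζ‖ = 1) :
    ‖1 - conj p * q‖ ≤ ‖ζ - p‖ + ‖ζ - q‖ := by
  have hζζ : ζ * conj ζ = 1 := by
    rw [mul_conj, normSq_eq_norm_sq, hζ]
    norm_num
  calc ‖1 - conj p * q‖ = ‖ζ * conj (ζ - p) + conj p * (ζ - q)‖ := by
        rw [map_sub]
        congr 1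
        linear_combination -hζζ
    _ ≤ ‖ζ * conj (ζ - p)‖ + ‖conj p * (ζ - q)‖ := norm_add_le _ _
    _ ≤ ‖ζ - p‖ + ‖ζ - q‖ := by
        rw [norm_mul, norm_mul, norm_conj, norm_conj, hζ, one_mul]
        gcongr
        exact mul_le_of_le_one_left (norm_nonneg _) hp

theorem norm_sub_sq_le_of_mem_segment {p q z ζ : ℂ} {a δ : ℝ} (hp : ‖p‖ < 1) (hq : ‖q‖ < 1)
    (hζ : ‖ζ‖ = 1) (ha : a < 1) (hz : z ∈ segment ℝ p q) (hzζ : dist z ζ ≤ δ)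
    (hρ : ‖(p - q) / (1 - conj p * q)‖ ≤ a) :
    ‖p - q‖ ^ 2 ≤ 4 * δ ^ 2 / (1 - a) ^ 2 * ‖(p - q) / (1 - conj p * q)‖ ^ 2 := by
  have hD : 0 < ‖1 - conj p * q‖ := norm_pos_iff.2 (one_sub_conj_mul_ne_zero hp.le hq)
  have hdρ : ‖p - q‖ = ‖(p - q) / (1 - conj p * q)‖ * ‖1 - conj p * q‖ := by
    rw [norm_div, div_mul_cancel₀ _ hD.ne']
  set D := ‖1 - conj p * q‖
  set ρ := ‖(p - q) / (1 - conj p * q)‖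
  have hsegment : ‖ζ - p‖ + ‖ζ - q‖ ≤ 2 * δ + ‖p - q‖ := by
    have : dist ζ p + dist ζ q ≤ 2 * δ + dist p q := by
      linarith [dist_add_dist_of_mem_segment hz, dist_triangle ζ z p, dist_triangle ζ z q,
        dist_comm p z, dist_comm z ζ]
    simpa only [dist_eq_norm] using this
  have hD_le : D * (1 - a) ≤ 2 * δ := by
    have := (norm_one_sub_conj_mul_le hp.le hζ).trans hsegment
    nlinarith
  calc ‖p - q‖ ^ 2 = ρ ^ 2 * D ^ 2 := by rw [hdρ]; ring
    _ ≤ ρ ^ 2 * (2 * δ / (1 - a)) ^ 2 := by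
        gcongr
        rwa [le_div_iff₀ (by linarith)]
    _ = 4 * δ ^ 2 / (1 - a) ^ 2 * ρ ^ 2 := by rw [div_pow]; ring

end Complex

theorem stmt_4_general (φ ψ : ℂ → ℂ) (hφm : Measurable φ) (hψm : Measurable ψ)
    (hφD : ∀ w ∈ Metric.sphere (0 : ℂ) 1, φ w ∈ Metric.ball (0 : ℂ) 1)
    (hψD : ∀ w ∈ Metric.sphere (0 : ℂ) 1, ψ w ∈ Metric.ball (0 : ℂ) 1)
    (a : ℝ) (ha1 : a < 1)
    (G : Set ℂ) (hG : MeasurableSet G) (hGsub : G ⊆ Metric.sphere (0 : ℂ) 1)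
    (hGa : ∀ w ∈ G,
      ‖(φ w - ψ w) / (1 - (starRingEnd ℂ) (φ w) * ψ w)‖ ≤ a)
    (t : ℝ) (ht0 : 0 ≤ t) (ht1 : t ≤ 1) :
    ∀ ζ : ℂ, ‖ζ‖ = 1 → ∀ δ : ℝ, 0 < δ →
      Measure.map (fun w => (t : ℂ) * φ w + (1 - (t : ℂ)) * ψ w)
          ((circleMeasure.restrict G).withDensity
            fun w => ENNReal.ofReal (‖φ w - ψ w‖ ^ 2))
          (Metric.ball (0 : ℂ) 1 ∩ Metric.ball ζ δ) ≤
        ENNReal.ofReal (4 * δ ^ 2 / (1 - a) ^ 2) *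
          Measure.map (fun w => (t : ℂ) * φ w + (1 - (t : ℂ)) * ψ w)
            ((circleMeasure.restrict G).withDensity
              fun w => ENNReal.ofReal
                (‖(φ w - ψ w) / (1 - (starRingEnd ℂ) (φ w) * ψ w)‖ ^ 2))
            (Metric.ball (0 : ℂ) 1 ∩ Metric.ball ζ δ) := by
  intro ζ hζ δ _
  refine Measure.map_withDensity_apply_le_const_mul (by fun_prop)
    (measurableSet_ball.inter measurableSet_ball) ENNReal.ofReal_ne_top
    ((ae_restrict_iff' hG).2 (ae_of_all _ fun w hwG hwS => ?_))
  have hw := hGsub hwG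
  have hsegment : (t : ℂ) * φ w + (1 - (t : ℂ)) * ψ w ∈ segment ℝ (φ w) (ψ w) :=
    ⟨t, 1 - t, ht0, by linarith, by ring, by simp [real_smul]⟩
  rw [← ENNReal.ofReal_mul (by positivity)]
  exact ENNReal.ofReal_le_ofReal <| norm_sub_sq_le_of_mem_segment
    (mem_ball_zero_iff.1 (hφD w hw)) (mem_ball_zero_iff.1 (hψD w hw)) hζ ha1 hsegment
    (mem_ball.1 hwS.2).le (hGa w hwG)

/-- Carleson-box comparison from the proof of Lemma 4.1 in
Kriete–Moorhouse.  With `ν_t` the pushforward under `φ_t = tφ + (1−t)ψ` of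
`χ_G |φ − ψ|² dm` and `β_t` the pushforward of `χ_G ρ² dm`, where `ρ ≤ a < 1` on `G`,
one has `ν_t(S(ζ,δ)) ≤ (4δ²/(1−a)²) β_t(S(ζ,δ))` for all `ζ ∈ ∂D`, `δ > 0`. -/
theorem stmt_4 (φ ψ : ℂ → ℂ) (hφm : Measurable φ) (hψm : Measurable ψ)
    (hφD : ∀ w ∈ Metric.sphere (0 : ℂ) 1, φ w ∈ Metric.ball (0 : ℂ) 1)
    (hψD : ∀ w ∈ Metric.sphere (0 : ℂ) 1, ψ w ∈ Metric.ball (0 : ℂ) 1)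
    (a : ℝ) (ha0 : 0 < a) (ha1 : a < 1)
    (G : Set ℂ) (hG : MeasurableSet G) (hGsub : G ⊆ Metric.sphere (0 : ℂ) 1)
    (hGa : ∀ w ∈ G,
      ‖(φ w - ψ w) / (1 - (starRingEnd ℂ) (φ w) * ψ w)‖ ≤ a)
    (t : ℝ) (ht0 : 0 ≤ t) (ht1 : t ≤ 1) :
    ∀ ζ : ℂ, ‖ζ‖ = 1 → ∀ δ : ℝ, 0 < δ →
      Measure.map (fun w => (t : ℂ) * φ w + (1 - (t : ℂ)) * ψ w)
          ((circleMeasure.restrict G).withDensity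
            fun w => ENNReal.ofReal (‖φ w - ψ w‖ ^ 2))
          (Metric.ball (0 : ℂ) 1 ∩ Metric.ball ζ δ) ≤
        ENNReal.ofReal (4 * δ ^ 2 / (1 - a) ^ 2) *
          Measure.map (fun w => (t : ℂ) * φ w + (1 - (t : ℂ)) * ψ w)
            ((circleMeasure.restrict G).withDensity
              fun w => ENNReal.ofReal
                (‖(φ w - ψ w) / (1 - (starRingEnd ℂ) (φ w) * ψ w)‖ ^ 2))
            (Metric.ball (0 : ℂ) 1 ∩ Metric.ball ζ δ) :=
  stmt_4_general φ ψ hφm hψm hφD hψD a ha1 G hG hGsub hGa t ht0 ht1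
end

section
/- For every a ∈ (0, 1) there exists a constant c > 0 such that for all z, w in the open unit disk D with |(z − w)/(1 − z̄ w)| ≤ a, all t ∈ [0, 1], all r ∈ (0, 1), and all α ∈ ℂ with |α| = 1, one has |α − r(t z + (1 − t) w)| ≥ c · max{ |α − r z|, |α − r w| }. -/
/-!
Rotating by `conj α` reduces to `α = 1`. For `‖A‖ ≤ 1` one has `‖1 - A‖² ≤ 2 Re (1 - A)`, and
`Re (1 - ·)` is affine along the segment, so at `ζ = 1 - (tA + (1 - t)B)` with `t ≥ 1/2` the
distance `‖1 - A‖` is at most `2 √‖ζ‖`. Expanding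
`1 - Ā B = (A - B) + 2 Re (1 - A) - conj (1 - A) (1 - B)` turns the pseudo-hyperbolic bound into
`(1 - a) ‖A - B‖ ≤ 4 ‖ζ‖ + ‖1 - A‖ M`, where `M = max ‖1 - A‖ ‖1 - B‖ ≤ ‖ζ‖ + ‖A - B‖`;
AM-GM on `‖1 - A‖ M` then gives `(1 - a)² M ≤ 18 ‖ζ‖`. Scaling the points by `r` costs a
factor `3`, as `‖1 - rU‖` dominates both `1 - r` and `‖1 - U‖ / 2`.
-/

open Complex ComplexConjugate

namespace Complex

theorem sq_norm_one_sub_le_two_mul_re {A : ℂ} (hA : ‖A‖ ≤ 1) :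
    ‖1 - A‖ ^ 2 ≤ 2 * (1 - A).re := by
  rw [← normSq_eq_norm_sq, normSq_sub, normSq_one, normSq_eq_norm_sq]
  simp only [one_mul, conj_re, one_re, sub_re]
  nlinarith [norm_nonneg A]

theorem norm_one_sub_conj_mul_le_s5 (A B : ℂ) :
    ‖1 - conj A * B‖ ≤ ‖A - B‖ + 2 * |(1 - A).re| + ‖1 - A‖ * ‖1 - B‖ := by
  have hexpand :
      1 - conj A * B = (A - B) + ((2 * (1 - A).re : ℝ) : ℂ) - conj (1 - A) * (1 - B) := by
    rw [← add_conj]; simp only [map_sub, map_one]; ring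
  rw [hexpand]
  calc _ ≤ ‖A - B‖ + ‖((2 * (1 - A).re : ℝ) : ℂ)‖ + ‖conj (1 - A) * (1 - B)‖ :=
        norm_sub_le_of_le (norm_add_le _ _) le_rfl
    _ = _ := by rw [norm_mul, norm_conj, norm_real, Real.norm_eq_abs, abs_mul, abs_two]

theorem norm_one_sub_conj_mul_comm (A B : ℂ) : ‖1 - conj B * A‖ = ‖1 - conj A * B‖ := by
  rw [← norm_conj]; simp only [map_sub, map_one, map_mul, conj_conj]; ring_nf

theorem norm_sub_eq_norm_one_sub_conj_mul {α : ℂ} (hα : ‖α‖ = 1) (w : ℂ) :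
    ‖α - w‖ = ‖1 - conj α * w‖ := by
  rw [← one_mul ‖α - w‖, ← hα, ← norm_conj, ← norm_mul, mul_sub, conj_mul', hα]
  simp

theorem sq_one_sub_mul_max_norm_one_sub_le_of_half_le {a : ℝ} (ha0 : 0 ≤ a) (ha1 : a ≤ 1)
    {A B : ℂ} (hA : ‖A‖ ≤ 1) (hB : ‖B‖ ≤ 1) (hAB : ‖A - B‖ ≤ a * ‖1 - conj A * B‖)
    {t : ℝ} (ht : 1 / 2 ≤ t) (ht1 : t ≤ 1) :
    (1 - a) ^ 2 * max ‖1 - A‖ ‖1 - B‖ ≤ 18 * ‖1 - (t * A + (1 - t) * B)‖ := by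
  set ζ := 1 - ((t : ℂ) * A + (1 - t) * B)
  set M := max ‖1 - A‖ ‖1 - B‖
  have hsqA := sq_norm_one_sub_le_two_mul_re hA
  have hsqB := sq_norm_one_sub_le_two_mul_re hB
  have hreB : 0 ≤ (1 - B).re := by nlinarith [norm_nonneg (1 - B)]
  have hreA : 0 ≤ (1 - A).re := by nlinarith [norm_nonneg (1 - A)]
  have hreζ : ζ.re = t * (1 - A).re + (1 - t) * (1 - B).re := by
    simp only [ζ, sub_re, add_re, mul_re, one_re, ofReal_re, ofReal_im, one_im, sub_im]; ring
  have hreA_le : (1 - A).re ≤ 2 * ‖ζ‖ := by nlinarith [re_le_norm ζ]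
  have hM_le : M ≤ ‖ζ‖ + ‖A - B‖ := by
    have hA' : 1 - A = ζ + ((1 - t : ℝ) : ℂ) * (B - A) := by simp only [ζ]; push_cast; ring
    have hB' : 1 - B = ζ + (t : ℂ) * (A - B) := by simp only [ζ]; ring
    refine max_le ?_ ?_
    · rw [hA']
      refine (norm_add_le _ _).trans (add_le_add le_rfl ?_)
      rw [norm_mul, norm_real, Real.norm_of_nonneg (by linarith), norm_sub_rev B A]
      exact mul_le_of_le_one_left (norm_nonneg _) (by linarith)
    · rw [hB']
      refine (norm_add_le _ _).trans (add_le_add le_rfl ?_)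
      rw [norm_mul, norm_real, Real.norm_of_nonneg (by linarith)]
      exact mul_le_of_le_one_left (norm_nonneg _) ht1
  have hM2 : M ≤ 2 := max_le
    ((norm_sub_le _ _).trans (by rw [norm_one]; linarith))
    ((norm_sub_le _ _).trans (by rw [norm_one]; linarith))
  have hAM : ‖1 - A‖ ≤ M := le_max_left _ _
  have hBM : ‖1 - B‖ ≤ M := le_max_right _ _
  have hdist : (1 - a) * ‖A - B‖ ≤ 4 * ‖ζ‖ + ‖1 - A‖ * M := by
    have := norm_one_sub_conj_mul_le_s5 A B
    rw [abs_of_nonneg hreA] at this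
    nlinarith [mul_le_mul_of_nonneg_left hBM (norm_nonneg (1 - A)),
      mul_nonneg (norm_nonneg (1 - A)) (norm_nonneg (1 - B))]
  have hb0 : 0 ≤ 1 - a := by linarith
  have hM0 : 0 ≤ M := (norm_nonneg _).trans hAM
  have hlin : (1 - a) * M ≤ (5 - a) * ‖ζ‖ + ‖1 - A‖ * M := by
    nlinarith [mul_le_mul_of_nonneg_left hM_le hb0]
  have hamgm := mul_nonneg (sq_nonneg (1 - a - ‖1 - A‖)) hM0
  have hsqM : ‖1 - A‖ ^ 2 * M ≤ 8 * ‖ζ‖ := by nlinarith [sq_nonneg ‖1 - A‖]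
  have hcoef : (1 - a) * (5 - a) * ‖ζ‖ ≤ 5 * ‖ζ‖ :=
    mul_le_mul_of_nonneg_right (by nlinarith) (norm_nonneg ζ)
  nlinarith [mul_le_mul_of_nonneg_left hlin hb0]

theorem sq_one_sub_mul_max_norm_one_sub_le {a : ℝ} (ha0 : 0 ≤ a) (ha1 : a ≤ 1)
    {A B : ℂ} (hA : ‖A‖ ≤ 1) (hB : ‖B‖ ≤ 1) (hAB : ‖A - B‖ ≤ a * ‖1 - conj A * B‖)
    {t : ℝ} (ht0 : 0 ≤ t) (ht1 : t ≤ 1) :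
    (1 - a) ^ 2 * max ‖1 - A‖ ‖1 - B‖ ≤ 18 * ‖1 - (t * A + (1 - t) * B)‖ := by
  rcases le_total (1 / 2) t with ht | ht
  · exact sq_one_sub_mul_max_norm_one_sub_le_of_half_le ha0 ha1 hA hB hAB ht ht1
  · have hBA : ‖B - A‖ ≤ a * ‖1 - conj B * A‖ := by
      rwa [norm_sub_rev, norm_one_sub_conj_mul_comm]
    have := sq_one_sub_mul_max_norm_one_sub_le_of_half_le ha0 ha1 hB hA hBA
      (t := 1 - t) (by linarith) (by linarith)
    rw [max_comm]
    convert this using 4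
    push_cast; ring

theorem sq_one_sub_mul_max_norm_sub_le {a : ℝ} (ha0 : 0 ≤ a) (ha1 : a ≤ 1)
    {A B : ℂ} (hA : ‖A‖ ≤ 1) (hB : ‖B‖ ≤ 1) (hAB : ‖A - B‖ ≤ a * ‖1 - conj A * B‖)
    {t : ℝ} (ht0 : 0 ≤ t) (ht1 : t ≤ 1) {α : ℂ} (hα : ‖α‖ = 1) :
    (1 - a) ^ 2 * max ‖α - A‖ ‖α - B‖ ≤ 18 * ‖α - (t * A + (1 - t) * B)‖ := by
  have hαα : α * conj α = 1 := by rw [mul_conj', hα]; simp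
  have hnorm (X : ℂ) : ‖conj α * X‖ = ‖X‖ := by rw [norm_mul, norm_conj, hα, one_mul]
  have hrot : ‖conj α * A - conj α * B‖ ≤ a * ‖1 - conj (conj α * A) * (conj α * B)‖ := by
    rw [← mul_sub, hnorm, map_mul, conj_conj,
      show α * conj A * (conj α * B) = (α * conj α) * (conj A * B) by ring, hαα, one_mul]
    exact hAB
  simp only [norm_sub_eq_norm_one_sub_conj_mul hα]
  convert sq_one_sub_mul_max_norm_one_sub_le ha0 ha1 (by rwa [hnorm]) (by rwa [hnorm]) hrot
    ht0 ht1 using 4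
  ring

theorem mul_max_norm_sub_ofReal_mul_le {A B U α : ℂ} (hA : ‖A‖ ≤ 1) (hB : ‖B‖ ≤ 1) (hU : ‖U‖ ≤ 1)
    (hα : ‖α‖ = 1) {c K : ℝ} (hc0 : 0 ≤ c) (hcK : c ≤ K)
    (h : c * max ‖α - A‖ ‖α - B‖ ≤ K * ‖α - U‖) {r : ℝ} (hr0 : 0 ≤ r) (hr1 : r ≤ 1) :
    c * max ‖α - r * A‖ ‖α - r * B‖ ≤ 3 * K * ‖α - r * U‖ := by
  have hshrink {X : ℂ} (hX : ‖X‖ ≤ 1) : ‖((1 - r : ℝ) : ℂ) * X‖ ≤ 1 - r := by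
    rw [norm_mul, norm_real, Real.norm_of_nonneg (by linarith)]
    exact mul_le_of_le_one_right (by linarith) hX
  have hsplit (X : ℂ) : α - r * X = (α - X) + ((1 - r : ℝ) : ℂ) * X := by push_cast; ring
  have hrU : 1 - r ≤ ‖α - r * U‖ := by
    have := norm_sub_norm_le α (r * U)
    rw [hα, norm_mul, norm_real, Real.norm_of_nonneg hr0] at this
    nlinarith
  have hU' : ‖α - U‖ ≤ 2 * ‖α - r * U‖ := by
    have := norm_sub_le (α - r * U) (((1 - r : ℝ) : ℂ) * U)
    rw [hsplit U, add_sub_cancel_right, ← hsplit] at this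
    linarith [hshrink hU]
  have hmax : max ‖α - r * A‖ ‖α - r * B‖ ≤ max ‖α - A‖ ‖α - B‖ + (1 - r) := by
    rw [hsplit, hsplit]
    exact max_le
      ((norm_add_le _ _).trans (add_le_add (le_max_left _ _) (hshrink hA)))
      ((norm_add_le _ _).trans (add_le_add (le_max_right _ _) (hshrink hB)))
  nlinarith [mul_le_mul_of_nonneg_left hmax hc0, mul_le_mul_of_nonneg_left hU' (hc0.trans hcK),
    mul_le_mul_of_nonneg_left hrU (hc0.trans hcK)]

end Complex

/-- comparison of denominators from the proof of Lemma 4.2 in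
Kriete–Moorhouse. For every `a ∈ (0,1)` there is `c > 0` such that for all `z, w`
in the unit disk at pseudo-hyperbolic distance at most `a`, all `t ∈ [0,1]`,
`r ∈ (0,1)` and unimodular `α`,
`|α − r(tz + (1−t)w)| ≥ c · max{|α − rz|, |α − rw|}`. -/
theorem stmt_5 (a : ℝ) (ha0 : 0 < a) (ha1 : a < 1) :
    ∃ c : ℝ, 0 < c ∧ ∀ z w : ℂ, ‖z‖ < 1 → ‖w‖ < 1 →
      ‖(z - w) / (1 - (starRingEnd ℂ) z * w)‖ ≤ a →
      ∀ t : ℝ, 0 ≤ t → t ≤ 1 → ∀ r : ℝ, 0 < r → r < 1 →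
      ∀ α : ℂ, ‖α‖ = 1 →
      c * max (‖α - (r : ℂ) * z‖) (‖α - (r : ℂ) * w‖) ≤
        ‖α - (r : ℂ) * ((t : ℂ) * z + (1 - (t : ℂ)) * w)‖ := by
  refine ⟨(1 - a) ^ 2 / 54, div_pos (pow_pos (sub_pos.2 ha1) 2) (by norm_num), ?_⟩
  intro z w hz hw hρ t ht0 ht1 r hr0 hr1 α hα
  have hden : 0 < ‖1 - conj z * w‖ := by
    refine norm_pos_iff.2 (sub_ne_zero.2 fun h => ?_)
    have : ‖conj z * w‖ < 1 := by
      rw [norm_mul, norm_conj]; nlinarith [norm_nonneg z, norm_nonneg w]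
    rw [← h, norm_one] at this
    exact this.false
  have hzw : ‖z - w‖ ≤ a * ‖1 - conj z * w‖ := by rwa [norm_div, div_le_iff₀ hden] at hρ
  have hU : ‖(t : ℂ) * z + (1 - t) * w‖ ≤ 1 := by
    simpa [real_smul] using convex_closedBall (0 : ℂ) 1 (mem_closedBall_zero_iff.2 hz.le)
      (mem_closedBall_zero_iff.2 hw.le) ht0 (sub_nonneg.2 ht1) (add_sub_cancel t 1)
  have hbound := mul_max_norm_sub_ofReal_mul_le hz.le hw.le hU hα (sq_nonneg (1 - a))
    (by nlinarith : (1 - a) ^ 2 ≤ 18)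
    (sq_one_sub_mul_max_norm_sub_le ha0.le ha1.le hz.le hw.le hzw ht0 ht1 hα)
    hr0.le hr1.le
  rw [div_mul_eq_mul_div, div_le_iff₀ (by norm_num)]
  linarith [hbound]
end

section
/- Let m ≥ 1 be an integer and let u and v be complex-valued functions defined on a punctured real interval (−ε, ε) \ {0} satisfying u(x) = Σ_{j=1}^{2m} a_j x^j + o(x^{2m}) and v(x) = Σ_{j=1}^{2m} b_j x^j + o(x^{2m}) as x → 0, where a_j = b_j is real for 1 ≤ j ≤ 2m − 1, Im a_{2m} > 0, and Im b_{2m} > 0. Then lim_{x→0} |u(x) − v(x)| / |u(x) − conj(v(x))| = |a_{2m} − b_{2m}| / |a_{2m} − conj(b_{2m})|, and this limit is strictly less than 1. -/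
/-!
Since the coefficients agree and are real below order `2m`, the expansions of `u - v` and
`u - conj v` start at order `2m`, with leading coefficients `a_{2m} - b_{2m}` and
`a_{2m} - conj b_{2m}`; the second one has positive imaginary part, so dividing numerator and
denominator by `|x|^{2m}` gives the limit. The limit equals `tanh (d_ℍ(a_{2m}, b_{2m}) / 2)`,
hence is `< 1`.
-/

open Filter Asymptotics Topology Finset ComplexConjugate

lemma Complex.norm_sub_div_norm_sub_conj_lt_one {z w : ℂ} (hz : 0 < z.im) (hw : 0 < w.im) :
    ‖z - w‖ / ‖z - conj w‖ < 1 := by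
  simpa [Complex.dist_eq, UpperHalfPlane.tanh_half_dist]
    using Real.tanh_lt_one (dist (UpperHalfPlane.mk z hz) (UpperHalfPlane.mk w hw) / 2)

lemma Finset.sum_sub_sum_eq_of_eq_of_ne {ι R : Type*} [AddCommGroup R] {s : Finset ι} {i : ι}
    (hi : i ∈ s) {f g : ι → R} (h : ∀ j ∈ s, j ≠ i → f j = g j) :
    ∑ j ∈ s, f j - ∑ j ∈ s, g j = f i - g i := by
  rw [← sum_sub_distrib]
  exact sum_eq_single_of_mem i hi fun j hj hji => by rw [h j hj hji, sub_self]

section Expansions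

variable {l : Filter ℝ} {n : ℕ} {u v : ℝ → ℂ} {a b : ℕ → ℂ}

lemma Asymptotics.IsLittleO.conj_sub_sum
    (hv : (fun x : ℝ => v x - ∑ j ∈ Icc 1 n, b j * (x : ℂ) ^ j) =o[l] fun x : ℝ => x ^ n) :
    (fun x : ℝ => conj (v x) - ∑ j ∈ Icc 1 n, conj (b j) * (x : ℂ) ^ j)
      =o[l] fun x : ℝ => x ^ n := by
  refine isLittleO_norm_left.mp (hv.norm_left.congr_left fun x => ?_)
  rw [← Complex.norm_conj, map_sub, map_sum]
  simp only [map_mul, map_pow, Complex.conj_ofReal]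

lemma isLittleO_sub_sub_leading_of_coeff_eq (hn : 1 ≤ n)
    (hu : (fun x : ℝ => u x - ∑ j ∈ Icc 1 n, a j * (x : ℂ) ^ j) =o[l] fun x : ℝ => x ^ n)
    (hv : (fun x : ℝ => v x - ∑ j ∈ Icc 1 n, b j * (x : ℂ) ^ j) =o[l] fun x : ℝ => x ^ n)
    (hab : ∀ j ∈ Icc 1 n, j ≠ n → a j = b j) :
    (fun x : ℝ => u x - v x - (a n - b n) * (x : ℂ) ^ n) =o[l] fun x : ℝ => x ^ n := by
  refine (hu.sub hv).congr_left fun x => ?_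
  have hsum := sum_sub_sum_eq_of_eq_of_ne (mem_Icc.mpr ⟨hn, le_rfl⟩)
    (f := fun j => a j * (x : ℂ) ^ j) (g := fun j => b j * (x : ℂ) ^ j)
    fun j hj hjn => by rw [hab j hj hjn]
  rw [sub_mul, ← hsum]
  ring

end Expansions

lemma tendsto_div_pow_of_isLittleO {f : ℝ → ℂ} {c : ℂ} {n : ℕ}
    (h : (fun x : ℝ => f x - c * (x : ℂ) ^ n) =o[𝓝[≠] (0 : ℝ)] fun x : ℝ => x ^ n) :
    Tendsto (fun x : ℝ => f x / (x : ℂ) ^ n) (𝓝[≠] (0 : ℝ)) (𝓝 c) := by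
  have hO : (fun x : ℝ => x ^ n) =O[𝓝[≠] (0 : ℝ)] fun x : ℝ => (x : ℂ) ^ n :=
    isBigO_of_le _ fun x => by simp
  have hlim := (h.trans_isBigO hO).tendsto_div_nhds_zero.add_const c
  rw [zero_add] at hlim
  refine hlim.congr' ?_
  filter_upwards [self_mem_nhdsWithin] with x hx
  have hx0 : (x : ℂ) ^ n ≠ 0 := pow_ne_zero _ (Complex.ofReal_ne_zero.mpr hx)
  field_simp
  ring

lemma tendsto_norm_div_norm_of_isLittleO {f g : ℝ → ℂ} {c d : ℂ} {n : ℕ} (hd : d ≠ 0)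
    (hf : (fun x : ℝ => f x - c * (x : ℂ) ^ n) =o[𝓝[≠] (0 : ℝ)] fun x : ℝ => x ^ n)
    (hg : (fun x : ℝ => g x - d * (x : ℂ) ^ n) =o[𝓝[≠] (0 : ℝ)] fun x : ℝ => x ^ n) :
    Tendsto (fun x : ℝ => ‖f x‖ / ‖g x‖) (𝓝[≠] (0 : ℝ)) (𝓝 (‖c‖ / ‖d‖)) := by
  refine ((tendsto_div_pow_of_isLittleO hf).norm.div (tendsto_div_pow_of_isLittleO hg).norm
    (norm_ne_zero_iff.mpr hd)).congr' ?_
  filter_upwards [self_mem_nhdsWithin] with x hx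
  have hx0 : ‖(x : ℂ) ^ n‖ ≠ 0 := norm_ne_zero_iff.mpr (pow_ne_zero _ (mod_cast hx))
  simp only [norm_div]
  exact div_div_div_cancel_right₀ hx0 _ _

/-- computational core of Proposition 5.10(b) in Kriete–Moorhouse.
If `u(x) = Σ_{j=1}^{2m} a_j x^j + o(x^{2m})` and `v(x) = Σ_{j=1}^{2m} b_j x^j + o(x^{2m})`
as `x → 0` in `ℝ \ {0}`, where `a_j = b_j` is real for `1 ≤ j ≤ 2m−1` and
`Im a_{2m} > 0 < Im b_{2m}`, then `|u − v|/|u − conj v| → |a_{2m} − b_{2m}|/|a_{2m} − conj b_{2m}| < 1`. -/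
theorem stmt_15 (m : ℕ) (hm : 1 ≤ m) (u v : ℝ → ℂ) (a b : ℕ → ℂ)
    (hu : (fun x : ℝ => u x - ∑ j ∈ Finset.Icc 1 (2 * m), a j * (x : ℂ) ^ j)
      =o[𝓝[≠] (0 : ℝ)] fun x : ℝ => x ^ (2 * m))
    (hv : (fun x : ℝ => v x - ∑ j ∈ Finset.Icc 1 (2 * m), b j * (x : ℂ) ^ j)
      =o[𝓝[≠] (0 : ℝ)] fun x : ℝ => x ^ (2 * m))
    (hreal : ∀ j, 1 ≤ j → j ≤ 2 * m - 1 → (a j).im = 0 ∧ a j = b j)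
    (ha : 0 < (a (2 * m)).im) (hb : 0 < (b (2 * m)).im) :
    Tendsto
      (fun x : ℝ => ‖u x - v x‖ / ‖u x - (starRingEnd ℂ) (v x)‖)
      (𝓝[≠] (0 : ℝ))
      (𝓝 (‖a (2 * m) - b (2 * m)‖ /
        ‖a (2 * m) - (starRingEnd ℂ) (b (2 * m))‖)) ∧
    ‖a (2 * m) - b (2 * m)‖ /
        ‖a (2 * m) - (starRingEnd ℂ) (b (2 * m))‖ < 1 := by
  have hlow : ∀ j ∈ Icc 1 (2 * m), j ≠ 2 * m → a j = b j ∧ a j = conj (b j) := by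
    intro j hj hjn
    obtain ⟨him, hab⟩ := hreal j (mem_Icc.mp hj).1 (by grind)
    exact ⟨hab, hab ▸ (Complex.conj_eq_iff_im.mpr him).symm⟩
  have hdiff := isLittleO_sub_sub_leading_of_coeff_eq (by omega) hu hv fun j hj hjn =>
    (hlow j hj hjn).1
  have hdiff_conj := isLittleO_sub_sub_leading_of_coeff_eq (by omega) hu hv.conj_sub_sum
    fun j hj hjn => (hlow j hj hjn).2
  have hd : a (2 * m) - conj (b (2 * m)) ≠ 0 := fun h => by
    have := congrArg Complex.im h
    simp only [Complex.sub_im, Complex.conj_im, Complex.zero_im] at this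
    linarith
  exact ⟨tendsto_norm_div_norm_of_isLittleO hd hdiff hdiff_conj,
    Complex.norm_sub_div_norm_sub_conj_lt_one ha hb⟩
end
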